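/- arXiv:1309.5684 — 5 statements merged into one kernel-verified Lean document; each statement's English description precedes it below -/
import Mathlib

section
/- Let m > 0 and Ω ∈ ℝ. Let f : ℝ → ℝ be differentiable on (−∞, Ω) and satisfy the Riccati differential inequality f'(t) ≥ (2/m) · f(t)² for all t < Ω. Then f(t) ≥ 0 for all t < Ω. -/
/-!
If `f t₀ < 0`, then `f` is negative on `(-∞, t₀]` because `f' ≥ c f² ≥ 0`, and there
`(1 / f + c t)' = c - f' / f² ≤ 0`. Going backwards in time from `t₀`, `1 / f` therefore grows
at least like `c (t₀ - t)`, so it is nonnegative at time `t₀ + 1 / (c f t₀)`, contradicting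
`f < 0`.
-/

variable {D : Set ℝ} {f f' : ℝ → ℝ} {c : ℝ}

lemma monotoneOn_of_hasDerivAt_nonneg (hD : Convex ℝ D) (hf : ∀ x ∈ D, HasDerivAt f (f' x) x)
    (hf'₀ : ∀ x ∈ D, 0 ≤ f' x) : MonotoneOn f D :=
  monotoneOn_of_hasDerivWithinAt_nonneg hD (fun x hx ↦ (hf x hx).continuousAt.continuousWithinAt)
    (fun x hx ↦ (hf x (interior_subset hx)).hasDerivWithinAt)
    fun x hx ↦ hf'₀ x (interior_subset hx)

lemma antitoneOn_of_hasDerivAt_nonpos (hD : Convex ℝ D) (hf : ∀ x ∈ D, HasDerivAt f (f' x) x)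
    (hf'₀ : ∀ x ∈ D, f' x ≤ 0) : AntitoneOn f D :=
  antitoneOn_of_hasDerivWithinAt_nonpos hD (fun x hx ↦ (hf x hx).continuousAt.continuousWithinAt)
    (fun x hx ↦ (hf x (interior_subset hx)).hasDerivWithinAt)
    fun x hx ↦ hf'₀ x (interior_subset hx)

lemma monotoneOn_of_mul_sq_le_deriv (hD : Convex ℝ D) (hc : 0 ≤ c)
    (hf : ∀ x ∈ D, HasDerivAt f (f' x) x) (hineq : ∀ x ∈ D, c * f x ^ 2 ≤ f' x) :
    MonotoneOn f D :=
  monotoneOn_of_hasDerivAt_nonneg hD hf fun x hx ↦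
    (by positivity : 0 ≤ c * f x ^ 2).trans (hineq x hx)

lemma antitoneOn_inv_add_mul_of_mul_sq_le_deriv (hD : Convex ℝ D)
    (hf : ∀ x ∈ D, HasDerivAt f (f' x) x) (hf₀ : ∀ x ∈ D, f x ≠ 0)
    (hineq : ∀ x ∈ D, c * f x ^ 2 ≤ f' x) :
    AntitoneOn (fun x ↦ (f x)⁻¹ + c * x) D := by
  refine antitoneOn_of_hasDerivAt_nonpos (f' := fun x ↦ (c * f x ^ 2 - f' x) / f x ^ 2) hD
    (fun x hx ↦ ?_) fun x hx ↦
      div_nonpos_of_nonpos_of_nonneg (by linarith [hineq x hx]) (sq_nonneg _)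
  have hfx : f x ≠ 0 := hf₀ x hx
  refine (((hf x hx).inv hfx).add ((hasDerivAt_id x).const_mul c)).congr_deriv ?_
  field_simp
  ring

theorem nonneg_of_mul_sq_le_deriv_on_Iic (hc : 0 < c) {t₀ : ℝ}
    (hf : ∀ x ≤ t₀, HasDerivAt f (f' x) x) (hineq : ∀ x ≤ t₀, c * f x ^ 2 ≤ f' x) :
    0 ≤ f t₀ := by
  by_contra! hneg
  have hf_neg : ∀ x ≤ t₀, f x < 0 := fun x hx ↦
    (monotoneOn_of_mul_sq_le_deriv (convex_Iic t₀) hc.le hf hineq hx Set.self_mem_Iic hx).trans_lt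
      hneg
  have hanti := antitoneOn_inv_add_mul_of_mul_sq_le_deriv (convex_Iic t₀) hf
    (fun x hx ↦ (hf_neg x hx).ne) hineq
  set s := t₀ + (f t₀)⁻¹ / c
  have hs : s ≤ t₀ :=
    add_le_of_nonpos_right (div_nonpos_of_nonpos_of_nonneg (inv_nonpos.2 hneg.le) hc.le)
  have hcs : c * s = c * t₀ + (f t₀)⁻¹ := by simp only [s]; field_simp
  have : (f t₀)⁻¹ + c * t₀ ≤ (f s)⁻¹ + c * s := hanti hs Set.self_mem_Iic hs
  linarith [inv_lt_zero.2 (hf_neg s hs)]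

/-- If `f` is differentiable on `(-∞, Ω)` and satisfies the Riccati differential
inequality `f' ≥ (2/m) f²` there (with `m > 0`), then `f ≥ 0` on `(-∞, Ω)`. -/
theorem stmt1 (m Ω : ℝ) (hm : 0 < m) (f f' : ℝ → ℝ)
    (hderiv : ∀ t < Ω, HasDerivAt f (f' t) t)
    (hineq : ∀ t < Ω, (2 / m) * (f t) ^ 2 ≤ f' t) :
    ∀ t < Ω, 0 ≤ f t := fun t ht ↦
  nonneg_of_mul_sq_le_deriv_on_Iic (by positivity) (fun x hx ↦ hderiv x (hx.trans_lt ht))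
    fun x hx ↦ hineq x (hx.trans_lt ht)
end

section
/- Let M be a nonempty set and P : M × [0, ∞) → ℝ with P ≥ 0. Let T₁ > 0, c' ∈ (0, 1], x₀ ∈ M, and t₀ ∈ [0, T₁] with Q := P(x₀, t₀) > 0, and suppose that c' · P(x, s) · (T₁ − s) ≤ Q · (T₁ − t₀) for all x ∈ M and all s ∈ [0, T₁]. Then for every x ∈ M and every t with −t₀ · Q ≤ t < (T₁ − t₀) · Q, the rescaled function satisfies P_Q(x, t) ≤ (1/c') · (T₁ − t₀) Q / ((T₁ − t₀) Q − t). -/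
/-! The center `(x₀, t₀)` nearly maximises `P(x,s)(T₁ - s)`, so `P(x,s) ≤ Q(T₁ - t₀)/(c'(T₁ - s))`.
At the rescaled time `s = t₀ + t/Q` the gap `T₁ - s` equals `((T₁ - t₀)Q - t)/Q`, and dividing by `Q`
gives the bound on `P_Q`. -/

open Set

lemma rescaled_time_mem_Ico {Q t₀ T₁ t : ℝ} (hQ : 0 < Q) (hlo : -(t₀ * Q) ≤ t)
    (hhi : t < (T₁ - t₀) * Q) : t₀ + t / Q ∈ Ico 0 T₁ := by
  constructor
  · have : -t₀ ≤ t / Q := by rw [le_div_iff₀ hQ]; linarith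
    linarith
  · have : t / Q < T₁ - t₀ := by rw [div_lt_iff₀ hQ]; linarith
    linarith

lemma sub_rescaled_time {Q : ℝ} (hQ : Q ≠ 0) (t₀ T₁ t : ℝ) :
    T₁ - (t₀ + t / Q) = ((T₁ - t₀) * Q - t) / Q := by
  field_simp
  ring

theorem stmt6_general (M : Type*)
    (P : M → ℝ → ℝ)
    (T₁ : ℝ) (c' : ℝ) (hc' : c' ∈ Set.Ioc (0:ℝ) 1)
    (x₀ : M) (t₀ : ℝ) (hQ : 0 < P x₀ t₀)
    (hbound : ∀ (x : M), ∀ s ∈ Set.Icc (0:ℝ) T₁,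
      c' * (P x s * (T₁ - s)) ≤ P x₀ t₀ * (T₁ - t₀)) :
    ∀ (x : M) (t : ℝ), -(t₀ * P x₀ t₀) ≤ t → t < (T₁ - t₀) * P x₀ t₀ →
      P x (t₀ + t / P x₀ t₀) / P x₀ t₀ ≤
        (1 / c') * ((T₁ - t₀) * P x₀ t₀ / ((T₁ - t₀) * P x₀ t₀ - t)) := by
  intro x t hlo hhi
  set Q := P x₀ t₀
  set s := t₀ + t / Q
  have hs : s ∈ Ico 0 T₁ := rescaled_time_mem_Ico hQ hlo hhi
  have hgap : 0 < T₁ - s := sub_pos.2 hs.2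
  have hc : 0 < c' := hc'.1
  have hPs : P x s ≤ Q * (T₁ - t₀) / (c' * (T₁ - s)) := by
    rw [le_div_iff₀ (by positivity), ← mul_assoc, mul_comm (P x s), mul_assoc]
    exact hbound x s (Ico_subset_Icc_self hs)
  calc P x s / Q ≤ Q * (T₁ - t₀) / (c' * (T₁ - s)) / Q := by gcongr
    _ = 1 / c' * ((T₁ - t₀) * Q / ((T₁ - t₀) * Q - t)) := by
      have hden : 0 < (T₁ - t₀) * Q - t := by linarith
      rw [sub_rescaled_time hQ.ne']
      field_simp

/-- Type IIa curvature bound on the dilated solutions: if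
`c' P(x,s)(T₁-s) ≤ Q(T₁-t₀)` for all `x ∈ M`, `s ∈ [0, T₁]`, with `Q := P(x₀,t₀) > 0`,
then the rescaled function `P_Q(x,t) = P(x, t₀ + t/Q)/Q` satisfies
`P_Q(x,t) ≤ (1/c') (T₁-t₀)Q / ((T₁-t₀)Q - t)` for `-t₀ Q ≤ t < (T₁-t₀) Q`. -/
theorem stmt6 (M : Type*) [Nonempty M]
    (P : M → ℝ → ℝ)
    (hP : ∀ (x : M) (t : ℝ), 0 ≤ t → 0 ≤ P x t)
    (T₁ : ℝ) (hT₁ : 0 < T₁) (c' : ℝ) (hc' : c' ∈ Set.Ioc (0:ℝ) 1)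
    (x₀ : M) (t₀ : ℝ) (ht₀ : t₀ ∈ Set.Icc (0:ℝ) T₁) (hQ : 0 < P x₀ t₀)
    (hbound : ∀ (x : M), ∀ s ∈ Set.Icc (0:ℝ) T₁,
      c' * (P x s * (T₁ - s)) ≤ P x₀ t₀ * (T₁ - t₀)) :
    ∀ (x : M) (t : ℝ), -(t₀ * P x₀ t₀) ≤ t → t < (T₁ - t₀) * P x₀ t₀ →
      P x (t₀ + t / P x₀ t₀) / P x₀ t₀ ≤
        (1 / c') * ((T₁ - t₀) * P x₀ t₀ / ((T₁ - t₀) * P x₀ t₀ - t)) :=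
  stmt6_general M P T₁ c' hc' x₀ t₀ hQ hbound
end

section
/- Let M be a nonempty set and P : M × [0, ∞) → ℝ with P ≥ 0. Let T₁ > 0, δ ∈ [0, 1), x₀ ∈ M, and t₀ ∈ (0, T₁) with Q := P(x₀, t₀) > 0, and suppose that (1 − δ) · s (T₁ − s) P(x, s) ≤ t₀ (T₁ − t₀) Q for all x ∈ M and all s ∈ [0, T₁]. Set α := t₀ · Q and ω := (T₁ − t₀) · Q. Then for every x ∈ M and every t ∈ (−α, ω), the rescaled function satisfies P_Q(x, t) ≤ (1/(1 − δ)) · (α/(α + t)) · (ω/(ω − t)). -/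
lemma add_div_mul_cancel {Q : ℝ} (hQ : Q ≠ 0) (t₀ t : ℝ) :
    (t₀ + t / Q) * Q = t₀ * Q + t := by
  field_simp

lemma sub_add_div_mul_cancel {Q : ℝ} (hQ : Q ≠ 0) (T₁ t₀ t : ℝ) :
    (T₁ - (t₀ + t / Q)) * Q = (T₁ - t₀) * Q - t := by
  field_simp
  ring

lemma div_le_of_mul_mul_mul_le {c Q a b A B p : ℝ} (hc : 0 < c) (hQ : 0 < Q)
    (ha : 0 < a) (hb : 0 < b) (h : c * (a * b * p) ≤ Q * (A * B)) :
    p / Q ≤ 1 / c * (A / a) * (B / b) := by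
  rw [div_le_iff₀ hQ, div_mul_div_comm, div_mul_div_comm, div_mul_eq_mul_div,
    le_div_iff₀ (by positivity)]
  linarith

theorem stmt7_general (M : Type*)
    (P : M → ℝ → ℝ)
    (T₁ : ℝ) (δ : ℝ) (hδ : δ ∈ Set.Ico (0:ℝ) 1)
    (x₀ : M) (t₀ : ℝ) (hQ : 0 < P x₀ t₀)
    (hbound : ∀ (x : M), ∀ s ∈ Set.Icc (0:ℝ) T₁,
      (1 - δ) * (s * (T₁ - s) * P x s) ≤ t₀ * (T₁ - t₀) * P x₀ t₀) :
    ∀ (x : M), ∀ t ∈ Set.Ioo (-(t₀ * P x₀ t₀)) ((T₁ - t₀) * P x₀ t₀),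
      P x (t₀ + t / P x₀ t₀) / P x₀ t₀ ≤
        (1 / (1 - δ)) * (t₀ * P x₀ t₀ / (t₀ * P x₀ t₀ + t)) *
          ((T₁ - t₀) * P x₀ t₀ / ((T₁ - t₀) * P x₀ t₀ - t)) := by
  rintro x t ⟨hαt, htω⟩
  set Q := P x₀ t₀
  set s := t₀ + t / Q
  have hsQ : s * Q = t₀ * Q + t := add_div_mul_cancel hQ.ne' t₀ t
  have hTsQ : (T₁ - s) * Q = (T₁ - t₀) * Q - t := sub_add_div_mul_cancel hQ.ne' T₁ t₀ t
  have hs_mem : s ∈ Set.Icc 0 T₁ := by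
    have hs : 0 < s * Q := by linarith
    have hTs : 0 < (T₁ - s) * Q := by linarith
    constructor <;> nlinarith
  apply div_le_of_mul_mul_mul_le (by linarith [hδ.2]) hQ (by linarith) (by linarith)
  calc _ = (1 - δ) * (s * (T₁ - s) * P x s) * Q ^ 2 := by rw [← hsQ, ← hTsQ]; ring
    _ ≤ t₀ * (T₁ - t₀) * Q * Q ^ 2 :=
        mul_le_mul_of_nonneg_right (hbound x s hs_mem) (sq_nonneg Q)
    _ = _ := by ring

/-- Type IIb curvature bound on the dilated solutions: if
`(1-δ) s(T₁-s) P(x,s) ≤ t₀(T₁-t₀) Q` for all `x ∈ M`, `s ∈ [0, T₁]`, with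
`Q := P(x₀,t₀) > 0`, `α := t₀ Q`, `ω := (T₁-t₀) Q`, then the rescaled function
`P_Q(x,t) = P(x, t₀ + t/Q)/Q` satisfies
`P_Q(x,t) ≤ (1/(1-δ)) (α/(α+t)) (ω/(ω-t))` for all `t ∈ (-α, ω)`. -/
theorem stmt7 (M : Type*) [Nonempty M]
    (P : M → ℝ → ℝ)
    (hP : ∀ (x : M) (t : ℝ), 0 ≤ t → 0 ≤ P x t)
    (T₁ : ℝ) (hT₁ : 0 < T₁) (δ : ℝ) (hδ : δ ∈ Set.Ico (0:ℝ) 1)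
    (x₀ : M) (t₀ : ℝ) (ht₀ : t₀ ∈ Set.Ioo (0:ℝ) T₁) (hQ : 0 < P x₀ t₀)
    (hbound : ∀ (x : M), ∀ s ∈ Set.Icc (0:ℝ) T₁,
      (1 - δ) * (s * (T₁ - s) * P x s) ≤ t₀ * (T₁ - t₀) * P x₀ t₀) :
    ∀ (x : M), ∀ t ∈ Set.Ioo (-(t₀ * P x₀ t₀)) ((T₁ - t₀) * P x₀ t₀),
      P x (t₀ + t / P x₀ t₀) / P x₀ t₀ ≤
        (1 / (1 - δ)) * (t₀ * P x₀ t₀ / (t₀ * P x₀ t₀ + t)) *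
          ((T₁ - t₀) * P x₀ t₀ / ((T₁ - t₀) * P x₀ t₀ - t)) :=
  stmt7_general M P T₁ δ hδ x₀ t₀ hQ hbound
end

section
/- Let M be a nonempty set and P : M × [0, ∞) → ℝ with P ≥ 0. Assume that for every T > 0 the set {s (T − s) P(x, s) : x ∈ M, s ∈ [0, T]} is bounded above, and denote its supremum by S(T); assume also that the set {s · P(x, s) : x ∈ M, s ∈ [0, ∞)} is not bounded above. Let T_i → ∞, δ_i → 0 with 0 ≤ δ_i < 1, and let x_i ∈ M, t_i ∈ [0, T_i] satisfy t_i (T_i − t_i) P(x_i, t_i) ≥ (1 − δ_i) · S(T_i) for every i. Then t_i · P(x_i, t_i) → ∞ and (T_i − t_i) · P(x_i, t_i) → ∞ as i → ∞. -/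
open Filter

/-!
Write `S(T)` for the supremum of `s (T - s) P(x, s)` over `x ∈ M`, `s ∈ [0, T]`. Testing it at a
single point `(x, s)` with `s ≤ T / 2` gives `S(T) / T ≥ s P(x, s) / 2`, so unboundedness of
`s P(x, s)` makes `S(T) / T` tend to infinity. By the choice of `(xᵢ, tᵢ)` the
quantity `tᵢ (Tᵢ - tᵢ) P(xᵢ, tᵢ) / Tᵢ = αᵢ ωᵢ / (αᵢ + ωᵢ)` is at least `(1 - δᵢ) S(Tᵢ) / Tᵢ`, hence
diverges, and it is dominated by both `αᵢ = tᵢ P(xᵢ, tᵢ)` and `ωᵢ = (Tᵢ - tᵢ) P(xᵢ, tᵢ)`.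
-/

theorem mul_mul_div_add_le_mul {a b p : ℝ} (ha : 0 ≤ a) (hb : 0 ≤ b) (hp : 0 ≤ p) :
    a * b * p / (a + b) ≤ a * p := by
  rcases (add_nonneg ha hb).eq_or_lt with hab | hab
  · rw [← hab, div_zero]
    exact mul_nonneg ha hp
  · rw [div_le_iff₀ hab]
    nlinarith [mul_nonneg (mul_nonneg ha ha) hp]

section WeightedValues

variable {M : Type*} (P : M → ℝ → ℝ)

def weightedValues (T : ℝ) : Set ℝ :=
  {v : ℝ | ∃ (x : M), ∃ s ∈ Set.Icc (0:ℝ) T, v = s * (T - s) * P x s}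

variable {P}

theorem half_mul_le_sSup_weightedValues {T s : ℝ} {x : M} (hbdd : BddAbove (weightedValues P T))
    (hs : s ∈ Set.Icc 0 (T / 2)) (hPxs : 0 ≤ P x s) :
    T * (s * P x s) / 2 ≤ sSup (weightedValues P T) := by
  have hmem : s * (T - s) * P x s ∈ weightedValues P T :=
    ⟨x, s, ⟨hs.1, by linarith [hs.1, hs.2]⟩, rfl⟩
  refine le_trans ?_ (le_csSup hbdd hmem)
  nlinarith [mul_nonneg (mul_nonneg hs.1 hPxs) (sub_nonneg.2 hs.2)]

theorem tendsto_sSup_weightedValues_div_atTop (hP : ∀ (x : M) (t : ℝ), 0 ≤ t → 0 ≤ P x t)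
    (hbdd : ∀ T : ℝ, 0 < T → BddAbove (weightedValues P T))
    (hunbdd : ¬ BddAbove {v : ℝ | ∃ (x : M) (s : ℝ), 0 ≤ s ∧ v = s * P x s}) :
    Tendsto (fun T => sSup (weightedValues P T) / T) atTop atTop := by
  refine tendsto_atTop.2 fun C => ?_
  obtain ⟨_, ⟨x, s, hs, rfl⟩, hCs⟩ := not_bddAbove_iff.1 hunbdd (2 * C)
  filter_upwards [eventually_ge_atTop (max (2 * s) 1)] with T hT
  have hT0 : 0 < T := one_pos.trans_le ((le_max_right _ _).trans hT)
  have hsT : s ∈ Set.Icc 0 (T / 2) := ⟨hs, by linarith [(le_max_left (2 * s) 1).trans hT]⟩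
  rw [le_div_iff₀ hT0]
  calc C * T ≤ T * (s * P x s) / 2 := by nlinarith
    _ ≤ sSup (weightedValues P T) := half_mul_le_sSup_weightedValues (hbdd T hT0) hsT (hP x s hs)

end WeightedValues

theorem stmt8_general (M : Type*)
    (P : M → ℝ → ℝ)
    (hP : ∀ (x : M) (t : ℝ), 0 ≤ t → 0 ≤ P x t)
    (hbdd : ∀ T : ℝ, 0 < T →
      BddAbove {v : ℝ | ∃ (x : M), ∃ s ∈ Set.Icc (0:ℝ) T, v = s * (T - s) * P x s})
    (hunbdd : ¬ BddAbove {v : ℝ | ∃ (x : M) (s : ℝ), 0 ≤ s ∧ v = s * P x s})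
    (T : ℕ → ℝ) (hTtop : Tendsto T atTop atTop)
    (δ : ℕ → ℝ)
    (hδlim : Tendsto δ atTop (nhds 0))
    (x : ℕ → M) (t : ℕ → ℝ) (ht : ∀ i, t i ∈ Set.Icc (0:ℝ) (T i))
    (hchoice : ∀ i, (1 - δ i) *
        sSup {v : ℝ | ∃ (y : M), ∃ s ∈ Set.Icc (0:ℝ) (T i), v = s * (T i - s) * P y s}
      ≤ t i * (T i - t i) * P (x i) (t i)) :
    Tendsto (fun i => t i * P (x i) (t i)) atTop atTop ∧
      Tendsto (fun i => (T i - t i) * P (x i) (t i)) atTop atTop := by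
  have hS := (tendsto_sSup_weightedValues_div_atTop hP hbdd hunbdd).comp hTtop
  have hratio : Tendsto (fun i => t i * (T i - t i) * P (x i) (t i) / T i) atTop atTop := by
    have h1δ : Tendsto (fun i => 1 - δ i) atTop (nhds 1) := by simpa using hδlim.const_sub 1
    refine tendsto_atTop_mono' _ ?_ (h1δ.pos_mul_atTop one_pos hS)
    filter_upwards [hTtop.eventually_gt_atTop 0] with i hTi
    rw [Function.comp_apply, ← mul_div_assoc]
    exact div_le_div_of_nonneg_right (hchoice i) hTi.le
  have hmin : ∀ i, t i * (T i - t i) * P (x i) (t i) / T i ≤ t i * P (x i) (t i) ∧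
      t i * (T i - t i) * P (x i) (t i) / T i ≤ (T i - t i) * P (x i) (t i) := fun i => by
    obtain ⟨ht0, htT⟩ := ht i
    have hp := hP (x i) _ ht0
    have hα := mul_mul_div_add_le_mul ht0 (sub_nonneg.2 htT) hp
    have hω := mul_mul_div_add_le_mul (sub_nonneg.2 htT) ht0 hp
    rw [add_sub_cancel] at hα
    rw [sub_add_cancel, mul_comm (T i - t i)] at hω
    exact ⟨hα, hω⟩
  exact ⟨tendsto_atTop_mono (fun i => (hmin i).1) hratio,
    tendsto_atTop_mono (fun i => (hmin i).2) hratio⟩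

/-- Divergence of the rescaling parameters for Type IIb singularities: if for every
`T > 0` the set `{s(T-s)P(x,s)}` is bounded above (with supremum `S(T)`), while
`{s P(x,s)}` is unbounded above, and `(xᵢ, tᵢ)` are chosen with `tᵢ ∈ [0, Tᵢ]`,
`Tᵢ → ∞`, `δᵢ → 0`, `tᵢ(Tᵢ-tᵢ)P(xᵢ,tᵢ) ≥ (1-δᵢ) S(Tᵢ)`, then `tᵢ P(xᵢ,tᵢ) → ∞`
and `(Tᵢ-tᵢ) P(xᵢ,tᵢ) → ∞`. -/
theorem stmt8 (M : Type*) [Nonempty M]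
    (P : M → ℝ → ℝ)
    (hP : ∀ (x : M) (t : ℝ), 0 ≤ t → 0 ≤ P x t)
    (hbdd : ∀ T : ℝ, 0 < T →
      BddAbove {v : ℝ | ∃ (x : M), ∃ s ∈ Set.Icc (0:ℝ) T, v = s * (T - s) * P x s})
    (hunbdd : ¬ BddAbove {v : ℝ | ∃ (x : M) (s : ℝ), 0 ≤ s ∧ v = s * P x s})
    (T : ℕ → ℝ) (hTtop : Tendsto T atTop atTop)
    (δ : ℕ → ℝ) (hδ0 : ∀ i, 0 ≤ δ i) (hδ1 : ∀ i, δ i < 1)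
    (hδlim : Tendsto δ atTop (nhds 0))
    (x : ℕ → M) (t : ℕ → ℝ) (ht : ∀ i, t i ∈ Set.Icc (0:ℝ) (T i))
    (hchoice : ∀ i, (1 - δ i) *
        sSup {v : ℝ | ∃ (y : M), ∃ s ∈ Set.Icc (0:ℝ) (T i), v = s * (T i - s) * P y s}
      ≤ t i * (T i - t i) * P (x i) (t i)) :
    Tendsto (fun i => t i * P (x i) (t i)) atTop atTop ∧
      Tendsto (fun i => (T i - t i) * P (x i) (t i)) atTop atTop :=
  stmt8_general M P hP hbdd hunbdd T hTtop δ hδlim x t ht hchoice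
end

section
/- Let m > 0, K > 0, B > 0, and T > 0. Let u : [0, T] → ℝ be continuous with u(0) ≥ −K, and suppose that for every t₀ ∈ [0, T) with u(t₀) < −B, the lower right Dini derivative satisfies liminf_{h → 0⁺} (u(t₀ + h) − u(t₀))/h ≥ u(t₀)²/m. Then for every t ∈ [0, T], u(t) ≥ min { −B, −1/(1/K + t/m) } = min { −B, −m/(m/K + t) }. -/
/-!
For `M > m` and `B' > B`, `w t = min (-B') (-1 / (c + t / M))` is a strict lower barrier for `u`:
where `u` touches `w` we have `u = w ≤ -B' < -B`, so the Dini bound applies, while the right slopes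
of `w` are at most `(1 / (c + t / M))² / M ≤ u² / M < u² / m`. Hence `u` moves strictly above `w`
right after any touching time, and a continuous induction on `[0, T]` gives `w ≤ u`. Letting
`M ↓ m` and `B' ↓ B` yields the estimate.
-/

open Filter Set Topology

/-- In `ℝ` a `liminf` that is not bounded below takes the junk value `0`. -/
theorem Real.eventually_lt_of_lt_liminf_of_ne_zero {α : Type*} {l : Filter α} {g : α → ℝ} {b : ℝ}
    (hb : b < liminf g l) (h0 : liminf g l ≠ 0) : ∀ᶠ x in l, b < g x :=
  eventually_lt_of_lt_liminf hb (by_contra fun hg ↦ h0 (Real.liminf_of_not_isBoundedUnder hg))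

theorem le_on_Icc_of_eventually_le_of_eq {u w : ℝ → ℝ} {a b : ℝ}
    (hu : ContinuousOn u (Icc a b)) (hw : ContinuousOn w (Icc a b)) (ha : w a ≤ u a)
    (touch : ∀ x ∈ Ico a b, w x = u x → ∀ᶠ h in 𝓝[>] 0, w (x + h) ≤ u (x + h)) :
    ∀ x ∈ Icc a b, w x ≤ u x := by
  have hclosed : IsClosed ({x | w x ≤ u x} ∩ Icc a b) := by
    rw [inter_comm]
    exact isClosed_Icc.isClosed_le hw hu
  refine fun x hx ↦ hclosed.Icc_subset_of_forall_mem_nhdsWithin ha ?_ hx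
  rintro x ⟨hwu : w x ≤ u x, hxab⟩
  rcases hwu.lt_or_eq with hlt | heq
  · have hIcc : Icc a b ∈ 𝓝[>] x := Icc_mem_nhdsGT_of_mem hxab
    exact nhdsWithin_le_of_mem hIcc <|
      ((hw x (Ico_subset_Icc_self hxab)).prodMk (hu x (Ico_subset_Icc_self hxab))).eventually
        (isOpen_lt continuous_fst continuous_snd |>.mem_nhds hlt) |>.mono fun _ ↦ le_of_lt
  · rw [← add_zero x, ← map_add_left_nhdsGT]
    exact touch x hxab heq

noncomputable def riccatiSolution (c M t : ℝ) : ℝ := -(1 / (c + t / M))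

section riccatiSolution

variable {c M : ℝ}

theorem hasDerivAt_riccatiSolution {t : ℝ} (ht : c + t / M ≠ 0) :
    HasDerivAt (riccatiSolution c M) (riccatiSolution c M t ^ 2 / M) t := by
  have hden : HasDerivAt (fun s ↦ c + s / M) (1 / M) t := by
    simpa using ((hasDerivAt_id t).div_const M).const_add c
  refine ((hden.inv ht).neg.congr_deriv ?_).congr_of_eventuallyEq (.of_forall fun s ↦ ?_)
  · simp only [riccatiSolution]
    field_simp
  · simp [riccatiSolution]

theorem riccatiSolution_den_pos (hc : 0 < c) (hM : 0 < M) {t : ℝ} (ht : 0 ≤ t) :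
    0 < c + t / M := by
  positivity

theorem riccatiSolution_neg (hc : 0 < c) (hM : 0 < M) {t : ℝ} (ht : 0 ≤ t) :
    riccatiSolution c M t < 0 :=
  neg_neg_of_pos (one_div_pos.2 (riccatiSolution_den_pos hc hM ht))

theorem monotoneOn_riccatiSolution (hc : 0 < c) (hM : 0 < M) :
    MonotoneOn (riccatiSolution c M) (Ici 0) := by
  intro s hs t _ hst
  exact neg_le_neg (one_div_le_one_div_of_le (riccatiSolution_den_pos hc hM hs) (by gcongr))

end riccatiSolution

theorem min_le_min_add_sub {a p q : ℝ} (hpq : p ≤ q) : min a q ≤ min a p + (q - p) := by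
  rw [← min_add_add_right, add_sub_cancel]
  exact min_le_min_right q (le_add_of_nonneg_right (sub_nonneg.2 hpq))

theorem eventually_min_riccatiSolution_lt {m M c a x : ℝ} {u : ℝ → ℝ} (hm : 0 < m) (hmM : m < M)
    (hc : 0 < c) (hx : 0 ≤ x) (htouch : min a (riccatiSolution c M x) = u x)
    (hDini : u x ^ 2 / m ≤ liminf (fun h ↦ (u (x + h) - u x) / h) (𝓝[>] 0)) :
    ∀ᶠ h in 𝓝[>] 0, min a (riccatiSolution c M (x + h)) < u (x + h) := by
  set w := riccatiSolution c M
  have hM : 0 < M := hm.trans hmM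
  have hux : u x ≤ w x := htouch ▸ min_le_right _ _
  have hwx : w x < 0 := riccatiSolution_neg hc hM hx
  have hu_sq : 0 < u x ^ 2 := by nlinarith
  have hslope_lt : w x ^ 2 / M < u x ^ 2 / m :=
    calc w x ^ 2 / M ≤ u x ^ 2 / M := (div_le_div_iff_of_pos_right hM).2 (by nlinarith)
      _ < u x ^ 2 / m := div_lt_div_of_pos_left hu_sq hm hmM
  obtain ⟨r, hwr, hru⟩ := exists_between hslope_lt
  have hw_slope : ∀ᶠ h in 𝓝[>] 0, h⁻¹ * (w (x + h) - w x) < r :=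
    (hasDerivAt_riccatiSolution (riccatiSolution_den_pos hc hM hx).ne').tendsto_slope_zero_right
      |>.eventually (eventually_lt_nhds hwr)
  have hu_slope : ∀ᶠ h in 𝓝[>] 0, r < (u (x + h) - u x) / h :=
    Real.eventually_lt_of_lt_liminf_of_ne_zero (hru.trans_le hDini)
      ((div_pos hu_sq hm).trans_le hDini).ne'
  filter_upwards [hw_slope, hu_slope, self_mem_nhdsWithin] with h hwh huh (hh : 0 < h)
  have hw_mono : w x ≤ w (x + h) :=
    monotoneOn_riccatiSolution hc hM hx (by simp only [mem_Ici]; linarith) (by linarith)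
  rw [inv_mul_lt_iff₀ hh] at hwh
  rw [lt_div_iff₀ hh] at huh
  calc min a (w (x + h)) ≤ min a (w x) + (w (x + h) - w x) := min_le_min_add_sub hw_mono
    _ < u x + h * r := by rw [htouch]; linarith
    _ < u (x + h) := by linarith

theorem min_riccatiSolution_le_of_lt {m M c B B' T : ℝ} (hm : 0 < m) (hmM : m < M) (hc : 0 < c)
    (hBB' : B < B') {u : ℝ → ℝ} (hu : ContinuousOn u (Icc 0 T)) (hu0 : -(1 / c) ≤ u 0)
    (hDini : ∀ t₀ ∈ Ico (0:ℝ) T, u t₀ < -B →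
      u t₀ ^ 2 / m ≤ liminf (fun h ↦ (u (t₀ + h) - u t₀) / h) (𝓝[>] 0)) :
    ∀ t ∈ Icc 0 T, min (-B') (riccatiSolution c M t) ≤ u t := by
  have hM : 0 < M := hm.trans hmM
  have hw : ContinuousOn (fun t ↦ min (-B') (riccatiSolution c M t)) (Icc 0 T) :=
    continuousOn_const.inf fun t ht ↦
      (hasDerivAt_riccatiSolution (riccatiSolution_den_pos hc hM ht.1).ne').continuousAt
        |>.continuousWithinAt
  refine le_on_Icc_of_eventually_le_of_eq hu hw ?_ fun x hx htouch ↦ ?_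
  · simpa [riccatiSolution] using min_le_of_right_le hu0
  · have hux : u x < -B := htouch ▸ (min_le_left _ _).trans_lt (neg_lt_neg hBB')
    exact (eventually_min_riccatiSolution_lt hm hmM hc hx.1 htouch (hDini x hx hux)).mono
      fun _ ↦ le_of_lt

theorem stmt11_general (m K B T : ℝ) (hm : 0 < m) (hK : 0 < K)
    (u : ℝ → ℝ) (hu : ContinuousOn u (Set.Icc 0 T))
    (hu0 : -K ≤ u 0)
    (hDini : ∀ t₀ ∈ Set.Ico (0:ℝ) T, u t₀ < -B →
      (u t₀) ^ 2 / m ≤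
        Filter.liminf (fun h => (u (t₀ + h) - u t₀) / h) (nhdsWithin 0 (Set.Ioi 0))) :
    ∀ t ∈ Set.Icc (0:ℝ) T,
      min (-B) (-(1 / (1 / K + t / m))) ≤ u t ∧
        min (-B) (-(1 / (1 / K + t / m))) = min (-B) (-(m / (m / K + t))) := by
  intro t ht
  have hperturbed : ∀ ε > 0, min (-(B + ε)) (riccatiSolution (1 / K) (m + ε) t) ≤ u t :=
    fun ε hε ↦ min_riccatiSolution_le_of_lt hm (lt_add_of_pos_right m hε) (one_div_pos.2 hK)
      (lt_add_of_pos_right B hε) hu (by rwa [one_div_one_div]) hDini t ht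
  have hden : 1 / K + t / m ≠ 0 := (riccatiSolution_den_pos (one_div_pos.2 hK) hm ht.1).ne'
  have hcont : ContinuousAt (fun ε ↦ min (-(B + ε)) (riccatiSolution (1 / K) (m + ε) t)) 0 := by
    simp only [riccatiSolution]
    fun_prop (disch := first | simpa using hden | simpa using hm.ne')
  refine ⟨?_, ?_⟩
  · simpa [riccatiSolution] using le_of_tendsto (hcont.continuousWithinAt (s := Ioi 0))
      (eventually_nhdsWithin_of_forall hperturbed)
  · congr 2
    field_simp

/-- Riccati comparison with a threshold: if `u` is continuous on `[0, T]`, `u(0) ≥ -K`,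
and whenever `u(t₀) < -B` (with `t₀ ∈ [0, T)`) the lower right Dini derivative of `u` at
`t₀` is at least `u(t₀)²/m`, then `u(t) ≥ min {-B, -1/(1/K + t/m)} = min {-B, -m/(m/K + t)}`
for every `t ∈ [0, T]`. -/
theorem stmt11 (m K B T : ℝ) (hm : 0 < m) (hK : 0 < K) (hB : 0 < B) (hT : 0 < T)
    (u : ℝ → ℝ) (hu : ContinuousOn u (Set.Icc 0 T))
    (hu0 : -K ≤ u 0)
    (hDini : ∀ t₀ ∈ Set.Ico (0:ℝ) T, u t₀ < -B →
      (u t₀) ^ 2 / m ≤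
        Filter.liminf (fun h => (u (t₀ + h) - u t₀) / h) (nhdsWithin 0 (Set.Ioi 0))) :
    ∀ t ∈ Set.Icc (0:ℝ) T,
      min (-B) (-(1 / (1 / K + t / m))) ≤ u t ∧
        min (-B) (-(1 / (1 / K + t / m))) = min (-B) (-(m / (m / K + t))) :=
  stmt11_general m K B T hm hK u hu hu0 hDini
end
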